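/- arXiv:1807.06396 — 2 statements merged into one kernel-verified Lean document; each statement's English description precedes it below -/
import Mathlib

section
/- Let D be an integral domain, ℓ a length function on D, and I an ideal of D admitting a primary decomposition I = Q₁ ∩ ⋯ ∩ Q_n that is minimal (the radicals rad(Q_i) are pairwise distinct and no Q_i contains the intersection of the others). Then ℓ(D/I) = Σ_{i=1}^{n} ℓ(D/Q_i). -/
open scoped ENNReal

universe u

structure LengthFunction (R : Type u) [CommRing R] where
  toFun : ∀ (M : Type u) [AddCommGroup M] [Module R M], ℝ≥0∞
  zero' : ∀ (M : Type u) [AddCommGroup M] [Module R M], Subsingleton M → toFun M = 0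
  additive : ∀ (M₁ M₂ M₃ : Type u) [AddCommGroup M₁] [Module R M₁]
      [AddCommGroup M₂] [Module R M₂] [AddCommGroup M₃] [Module R M₃]
      (f : M₁ →ₗ[R] M₂) (g : M₂ →ₗ[R] M₃),
      Function.Injective f → Function.Surjective g →
      LinearMap.range f = LinearMap.ker g →
      toFun M₂ = toFun M₁ + toFun M₃
  upperContinuous : ∀ (M : Type u) [AddCommGroup M] [Module R M],
      toFun M = ⨆ (N : Submodule R M) (_ : N.FG), toFun N

/-!
Induct on the number of components. Pick `Q` whose radical `P` is minimal among the radicals and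
let `J` be the intersection of the other components. Since `P` is prime and the radicals are
distinct, `J ⊄ P`; for `s ∈ J \ P`, multiplication by `s` is injective on `D ⧸ Q` and kills
`D ⧸ (Q + J)`, so `ℓ (D ⧸ (Q + J)) = 0` as soon as `ℓ (D ⧸ Q)` is finite. The exact sequence
`0 → D ⧸ (Q ∩ J) → D ⧸ Q × D ⧸ J → D ⧸ (Q + J) → 0` then gives
`ℓ (D ⧸ (Q ∩ J)) = ℓ (D ⧸ Q) + ℓ (D ⧸ J)`; when `ℓ (D ⧸ Q) = ∞` both sides are infinite.
-/

open Function LinearMap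

namespace Submodule

variable {R M : Type*} [Ring R] [AddCommGroup M] [Module R M] (p q : Submodule R M)

noncomputable def quotientInfToProd : M ⧸ (p ⊓ q) →ₗ[R] (M ⧸ p) × (M ⧸ q) :=
  (factor inf_le_left).prod (factor inf_le_right)

noncomputable def prodToQuotientSup : (M ⧸ p) × (M ⧸ q) →ₗ[R] M ⧸ (p ⊔ q) :=
  factor le_sup_left ∘ₗ LinearMap.fst R _ _ - factor le_sup_right ∘ₗ LinearMap.snd R _ _

theorem injective_quotientInfToProd : Injective (quotientInfToProd p q) := by
  refine (injective_iff_map_eq_zero _).mpr fun x hx => ?_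
  obtain ⟨x, rfl⟩ := Quotient.mk_surjective _ x
  simpa [quotientInfToProd] using hx

theorem surjective_prodToQuotientSup : Surjective (prodToQuotientSup p q) := by
  intro x
  obtain ⟨x, rfl⟩ := Quotient.mk_surjective _ x
  exact ⟨(Quotient.mk x, 0), by simp [prodToQuotientSup]⟩

theorem exact_quotientInfToProd_prodToQuotientSup :
    Exact (quotientInfToProd p q) (prodToQuotientSup p q) := by
  rintro ⟨x, y⟩
  obtain ⟨x, rfl⟩ := Quotient.mk_surjective _ x
  obtain ⟨y, rfl⟩ := Quotient.mk_surjective _ y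
  simp only [prodToQuotientSup, quotientInfToProd, LinearMap.sub_apply, coe_comp, coe_fst,
    Function.comp_apply, coe_snd, mapQ_apply, id_coe, id_eq, sub_eq_zero, Quotient.eq, mem_sup,
    Set.mem_range, LinearMap.prod_apply, Function.prod_apply, Prod.mk.injEq]
  constructor
  · rintro ⟨a, ha, b, hb, hab⟩
    refine ⟨Quotient.mk (x - a), ?_, ?_⟩ <;> simp only [mapQ_apply, id_coe, id_eq, Quotient.eq]
    · simpa using p.neg_mem ha
    · rwa [show x - a - y = b by rw [sub_right_comm, ← hab]; abel]
  · rintro ⟨z, hzx, hzy⟩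
    obtain ⟨z, rfl⟩ := Quotient.mk_surjective _ z
    simp only [mapQ_apply, id_coe, id_eq, Quotient.eq] at hzx hzy
    exact ⟨_, p.neg_mem hzx, _, hzy, by abel⟩

end Submodule

theorem Ideal.IsPrimary.injective_lsmul {R : Type*} [CommRing R] {Q : Ideal R}
    (hQ : Q.IsPrimary) {s : R} (hs : s ∉ Q.radical) : Injective (lsmul R (R ⧸ Q) s) := by
  refine (injective_iff_map_eq_zero _).mpr fun x hx => ?_
  obtain ⟨x, rfl⟩ := Submodule.Quotient.mk_surjective _ x
  rw [lsmul_apply, ← Submodule.Quotient.mk_smul, Submodule.Quotient.mk_eq_zero, smul_eq_mul, mul_comm] at hx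
  exact (Submodule.Quotient.mk_eq_zero _).mpr (((Ideal.isPrimary_iff.mp hQ).2 hx).resolve_right hs)

theorem Ideal.not_finsetInf_erase_le_radical {R ι : Type*} [CommRing R] [DecidableEq ι]
    {S : Finset ι} {Q : ι → Ideal R} (hdist : Set.InjOn (fun i => (Q i).radical) S) {i : ι}
    (hi : MinimalFor (· ∈ S) (fun i => (Q i).radical) i) (hQi : (Q i).IsPrimary) :
    ¬ (S.erase i).inf Q ≤ (Q i).radical := by
  intro hle
  obtain ⟨j, hj, hji⟩ := (Ideal.isPrime_radical hQi).inf_le'.mp hle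
  have hjS := Finset.mem_of_mem_erase hj
  have hrad : (Q j).radical ≤ (Q i).radical := (Ideal.isPrime_radical hQi).radical_le_iff.mpr hji
  exact Finset.ne_of_mem_erase hj (hdist hjS hi.1 (le_antisymm hrad (hi.2 hjS hrad)))

namespace LengthFunction

variable {R : Type u} [CommRing R] (ℓ : LengthFunction R)
variable {M N P : Type u} [AddCommGroup M] [Module R M] [AddCommGroup N] [Module R N]
  [AddCommGroup P] [Module R P]

theorem toFun_eq_add_of_exact {f : M →ₗ[R] N} {g : N →ₗ[R] P} (hf : Injective f)
    (hg : Surjective g) (h : Exact f g) : ℓ.toFun N = ℓ.toFun M + ℓ.toFun P :=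
  ℓ.additive M N P f g hf hg h.linearMap_ker_eq.symm

theorem toFun_prod : ℓ.toFun (M × N) = ℓ.toFun M + ℓ.toFun N :=
  ℓ.toFun_eq_add_of_exact inl_injective Prod.snd_surjective .inl_snd

theorem toFun_le_of_surjective {g : M →ₗ[R] N} (hg : Surjective g) :
    ℓ.toFun N ≤ ℓ.toFun M := by
  rw [ℓ.toFun_eq_add_of_exact (ker g).injective_subtype hg (exact_subtype_ker_map g)]
  exact le_add_self

theorem toFun_quotient_range_eq_zero {f : M →ₗ[R] M} (hf : Injective f)
    (hM : ℓ.toFun M ≠ ⊤) : ℓ.toFun (M ⧸ range f) = 0 := by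
  have h := ℓ.toFun_eq_add_of_exact hf (range f).mkQ_surjective (exact_map_mkQ_range f)
  exact ((ENNReal.add_right_inj hM).mp (by rw [add_zero, ← h])).symm

theorem toFun_quotient_antitone {A B : Ideal R} (h : A ≤ B) :
    ℓ.toFun (R ⧸ B) ≤ ℓ.toFun (R ⧸ A) :=
  ℓ.toFun_le_of_surjective (Submodule.factor_surjective h)

theorem toFun_quotient_inf_add_sup (A B : Ideal R) :
    ℓ.toFun (R ⧸ (A ⊓ B)) + ℓ.toFun (R ⧸ (A ⊔ B)) = ℓ.toFun (R ⧸ A) + ℓ.toFun (R ⧸ B) := by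
  rw [← ℓ.toFun_eq_add_of_exact (A.injective_quotientInfToProd B)
    (A.surjective_prodToQuotientSup B) (A.exact_quotientInfToProd_prodToQuotientSup B),
    ℓ.toFun_prod]

theorem toFun_quotient_sup_eq_zero {Q J : Ideal R} (hQ : Q.IsPrimary) (hJ : ¬ J ≤ Q.radical)
    (hfin : ℓ.toFun (R ⧸ Q) ≠ ⊤) : ℓ.toFun (R ⧸ (Q ⊔ J)) = 0 := by
  obtain ⟨s, hsJ, hs⟩ := Set.not_subset.mp hJ
  have hkill : range (lsmul R (R ⧸ Q) s) ≤ ker (Submodule.factor (le_sup_left : Q ≤ Q ⊔ J)) := by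
    rintro _ ⟨x, rfl⟩
    obtain ⟨x, rfl⟩ := Submodule.Quotient.mk_surjective _ x
    rw [mem_ker, lsmul_apply, ← Submodule.Quotient.mk_smul, Submodule.mapQ_apply, id_apply, Submodule.Quotient.mk_eq_zero]
    exact Submodule.mem_sup_right (J.mul_mem_right x hsJ)
  refine nonpos_iff_eq_zero.mp ?_
  calc ℓ.toFun (R ⧸ (Q ⊔ J))
      ≤ ℓ.toFun ((R ⧸ Q) ⧸ range (lsmul R (R ⧸ Q) s)) :=
        ℓ.toFun_le_of_surjective (surjective_range_liftQ hkill (Submodule.factor_surjective _))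
    _ = 0 := ℓ.toFun_quotient_range_eq_zero (hQ.injective_lsmul hs) hfin

theorem toFun_quotient_inf_of_not_le_radical {Q J : Ideal R} (hQ : Q.IsPrimary)
    (hJ : ¬ J ≤ Q.radical) : ℓ.toFun (R ⧸ (Q ⊓ J)) = ℓ.toFun (R ⧸ Q) + ℓ.toFun (R ⧸ J) := by
  by_cases hfin : ℓ.toFun (R ⧸ Q) = ⊤
  · rw [hfin, top_add, ← top_le_iff, ← hfin]
    exact ℓ.toFun_quotient_antitone inf_le_left
  · simpa [ℓ.toFun_quotient_sup_eq_zero hQ hJ hfin] using ℓ.toFun_quotient_inf_add_sup Q J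

theorem toFun_quotient_finsetInf {ι : Type*} [DecidableEq ι] (Q : ι → Ideal R) (S : Finset ι)
    (hprim : ∀ i ∈ S, (Q i).IsPrimary) (hdist : Set.InjOn (fun i => (Q i).radical) S) :
    ℓ.toFun (R ⧸ S.inf Q) = ∑ i ∈ S, ℓ.toFun (R ⧸ Q i) := by
  induction S using Finset.strongInduction with
  | H S ih =>
  rcases S.eq_empty_or_nonempty with rfl | hS
  · rw [Finset.inf_empty, Finset.sum_empty]
    exact ℓ.zero' _ inferInstance
  obtain ⟨i, hi⟩ := S.exists_minimalFor (fun i => (Q i).radical) hS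
  have hJ := Ideal.not_finsetInf_erase_le_radical hdist hi (hprim i hi.1)
  rw [← Finset.insert_erase hi.1, Finset.inf_insert, Finset.sum_insert (S.notMem_erase i),
    ℓ.toFun_quotient_inf_of_not_le_radical (hprim i hi.1) hJ,
    ih _ (S.erase_ssubset hi.1) (fun j hj => hprim j (Finset.mem_of_mem_erase hj))
      (hdist.mono (Finset.erase_subset i S))]

end LengthFunction

theorem length_primary_decomposition_general {D : Type u} [CommRing D]
    (ℓ : LengthFunction D) (n : ℕ) (Q : Fin n → Ideal D) (I : Ideal D)
    (hprim : ∀ i, (Q i).IsPrimary)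
    (hI : I = ⨅ i, Q i)
    (hdist : ∀ i j, i ≠ j → (Q i).radical ≠ (Q j).radical) :
    ℓ.toFun (D ⧸ I) = ∑ i, ℓ.toFun (D ⧸ Q i) := by
  classical
  rw [hI, ← Finset.inf_univ_eq_iInf]
  exact ℓ.toFun_quotient_finsetInf Q Finset.univ (fun i _ => hprim i)
    fun i _ j _ h => not_imp_not.mp (hdist i j) h

theorem length_primary_decomposition {D : Type u} [CommRing D] [IsDomain D]
    (ℓ : LengthFunction D) (n : ℕ) (Q : Fin n → Ideal D) (I : Ideal D)
    (hprim : ∀ i, (Q i).IsPrimary)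
    (hI : I = ⨅ i, Q i)
    (hdist : ∀ i j, i ≠ j → (Q i).radical ≠ (Q j).radical)
    (hmin : ∀ i, ¬ (⨅ j ∈ ({i}ᶜ : Set (Fin n)), Q j) ≤ Q i) :
    ℓ.toFun (D ⧸ I) = ∑ i, ℓ.toFun (D ⧸ Q i) :=
  length_primary_decomposition_general ℓ n Q I hprim hI hdist
end

section
/- Let D be an integral domain, T a flat D-algebra, and ℓ a length function on T. Then the map ℓ^D sending a D-module M to ℓ(T ⊗_D M) is a length function on D. -/
/-!
Flatness of `T` makes `T ⊗[D] -` exact, so additivity on short exact sequences passes from `ℓ`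
to `M ↦ ℓ (T ⊗[D] M)`. For upper continuity, flatness also identifies `T ⊗[D] N` with a
`T`-submodule of `T ⊗[D] M` for every submodule `N ≤ M`, and every finitely generated
`T`-submodule of `T ⊗[D] M` lies in such a `T ⊗[D] N` with `N` finitely generated.
-/

open scoped ENNReal

universe u

open TensorProduct

namespace LengthFunction

section Monotone

variable {R : Type u} [CommRing R] (ℓ : LengthFunction R)
  {M N : Type u} [AddCommGroup M] [Module R M] [AddCommGroup N] [Module R N]

theorem toFun_congr (e : M ≃ₗ[R] N) : ℓ.toFun M = ℓ.toFun N := by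
  rw [ℓ.additive PUnit M N 0 e.toLinearMap (Function.injective_of_subsingleton _) e.surjective
      (by rw [LinearMap.range_zero, LinearMap.ker_eq_bot.mpr e.injective]),
    ℓ.zero' PUnit inferInstance, zero_add]

theorem toFun_submodule_le (P : Submodule R M) : ℓ.toFun P ≤ ℓ.toFun M := by
  rw [ℓ.additive P M (M ⧸ P) P.subtype P.mkQ P.injective_subtype P.mkQ_surjective
    (by rw [Submodule.range_subtype, Submodule.ker_mkQ])]
  exact le_self_add

theorem toFun_le_of_injective {f : M →ₗ[R] N} (hf : Function.Injective f) :
    ℓ.toFun M ≤ ℓ.toFun N :=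
  (ℓ.toFun_congr (LinearEquiv.ofInjective f hf)).trans_le (ℓ.toFun_submodule_le _)

theorem toFun_submodule_le_of_le_range {f : N →ₗ[R] M} (hf : Function.Injective f)
    {P : Submodule R M} (hP : P ≤ LinearMap.range f) : ℓ.toFun P ≤ ℓ.toFun N :=
  ℓ.toFun_le_of_injective (f := (LinearEquiv.ofInjective f hf).symm.toLinearMap ∘ₗ
    Submodule.inclusion hP)
    ((LinearEquiv.ofInjective f hf).symm.injective.comp (Submodule.inclusion_injective hP))

end Monotone

section BaseChange

variable {D : Type u} [CommRing D] (T : Type u) [CommRing T] [Algebra D T]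
  {M : Type u} [AddCommGroup M] [Module D M]

theorem exists_fg_le_range_baseChange_subtype {P : Submodule T (T ⊗[D] M)} (hP : P.FG) :
    ∃ N : Submodule D M, N.FG ∧ P ≤ LinearMap.range (N.subtype.baseChange T) := by
  obtain ⟨s, rfl⟩ := hP
  obtain ⟨N, hN, hs⟩ :=
    exists_finite_submodule_right_of_setFinite (s : Set (T ⊗[D] M)) s.finite_toSet
  exact ⟨N, Module.Finite.iff_fg.mp hN, Submodule.span_le.mpr hs⟩

variable [Module.Flat D T]

theorem baseChange_subtype_injective (N : Submodule D M) :
    Function.Injective (N.subtype.baseChange T) :=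
  Module.Flat.lTensor_preserves_injective_linearMap _ N.injective_subtype

theorem toFun_tensor_eq_iSup_fg (ℓ : LengthFunction T) :
    ℓ.toFun (T ⊗[D] M) = ⨆ (N : Submodule D M) (_ : N.FG), ℓ.toFun (T ⊗[D] N) := by
  refine le_antisymm ?_ (iSup₂_le fun N _ =>
    ℓ.toFun_le_of_injective (baseChange_subtype_injective T N))
  rw [ℓ.upperContinuous (T ⊗[D] M)]
  refine iSup₂_le fun P hP => ?_
  obtain ⟨N, hN, hPN⟩ := exists_fg_le_range_baseChange_subtype T hP
  exact (ℓ.toFun_submodule_le_of_le_range (baseChange_subtype_injective T N) hPN).trans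
    (le_iSup₂_of_le (f := fun (N : Submodule D M) (_ : N.FG) => ℓ.toFun (T ⊗[D] N)) N hN le_rfl)

/-- The paper's `ℓ^D`. -/
def comap (ℓ : LengthFunction T) : LengthFunction D where
  toFun M _ _ := ℓ.toFun (T ⊗[D] M)
  zero' _ _ _ _ := ℓ.zero' _ inferInstance
  additive _ _ _ _ _ _ _ _ _ f g hf hg hfg :=
    ℓ.additive _ _ _ (f.baseChange T) (g.baseChange T)
      (Module.Flat.lTensor_preserves_injective_linearMap f hf)
      (LinearMap.lTensor_surjective T hg)
      (LinearMap.exact_iff.mp (show Function.Exact (f.baseChange T) (g.baseChange T) from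
        Module.Flat.lTensor_exact T (LinearMap.exact_iff.mpr hfg.symm))).symm
  upperContinuous _ _ _ := toFun_tensor_eq_iSup_fg T ℓ

end BaseChange

end LengthFunction

open TensorProduct in
theorem length_tensor_general {D : Type u} [CommRing D]
    (T : Type u) [CommRing T] [Algebra D T] [Module.Flat D T] (ℓ : LengthFunction T) :
    ∃ ℓD : LengthFunction D,
      ∀ (M : Type u) [AddCommGroup M] [Module D M],
        ℓD.toFun M = ℓ.toFun (T ⊗[D] M) :=
  ⟨ℓ.comap T, fun _ _ _ => rfl⟩

open TensorProduct in
theorem length_tensor {D : Type u} [CommRing D] [IsDomain D]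
    (T : Type u) [CommRing T] [Algebra D T] [Module.Flat D T] (ℓ : LengthFunction T) :
    ∃ ℓD : LengthFunction D,
      ∀ (M : Type u) [AddCommGroup M] [Module D M],
        ℓD.toFun M = ℓ.toFun (T ⊗[D] M) :=
  length_tensor_general T ℓ
end
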